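/- arXiv:1605.00437 — 3 statements merged into one kernel-verified Lean document; each statement's English description precedes it below -/
import Mathlib

section
/- Let J ∈ ℕ, let M and K be real symmetric J×J matrices with M invertible, let c₀ ∈ ℂ^J, and set c(t) = exp(−(i/2) t · M⁻¹K) · c₀ (the real matrices acting on ℂ^J via entrywise coercion). Then for every t ∈ ℝ, star(c(t)) ⬝ᵥ (M ⬝ᵥ c(t)) = star(c₀) ⬝ᵥ (M ⬝ᵥ c₀). -/
/-!
With `A = M⁻¹K` we have `M A = K = Aᵀ M`, so `A` is self-adjoint for the form `star u ⬝ᵥ M v`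
and `B = -(i t / 2) A` is skew-adjoint for it: `M B = -Bᴴ M`. Then `M` intertwines `B` with
`-Bᴴ`, hence `exp(Bᴴ) M exp B = M`, i.e. the flow `exp B` preserves the form.
-/

open Matrix NormedSpace

namespace Matrix

variable {m : Type*} [Fintype m]

theorem star_mulVec_dotProduct_mulVec {α : Type*} [NonUnitalSemiring α] [StarRing α]
    (N P : Matrix m m α) (v : m → α) :
    star (N *ᵥ v) ⬝ᵥ (P *ᵥ (N *ᵥ v)) = star v ⬝ᵥ ((Nᴴ * P * N) *ᵥ v) := by
  rw [star_mulVec, dotProduct_mulVec, vecMul_vecMul, ← dotProduct_mulVec, mulVec_mulVec,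
    Matrix.mul_assoc]

theorem mul_smul_eq_neg_conjTranspose_smul_mul {α : Type*} [CommRing α] [StarRing α]
    {A P : Matrix m m α} (h : P * A = Aᴴ * P) {z : α} (hz : star z = -z) :
    P * (z • A) = -(z • A)ᴴ * P := by
  rw [conjTranspose_smul, hz, neg_smul, neg_neg, Matrix.mul_smul, Matrix.smul_mul, h]

variable [DecidableEq m]

theorem conjTranspose_exp_mul_mul_exp {𝕜 : Type*} [RCLike 𝕜] {A P : Matrix m m 𝕜}
    (h : P * A = -Aᴴ * P) : (exp A)ᴴ * P * exp A = P := by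
  rw [← exp_conjTranspose, ← neg_neg Aᴴ]
  -- matrices carry no global norm; the operator norm makes them a Banach algebra
  open scoped Norms.Operator in exact SemiconjBy.exp_neg_mul_mul_exp_eq_self h

theorem IsSymm.mul_nonsing_inv_mul_eq_transpose_mul {α : Type*} [CommRing α] {M K : Matrix m m α}
    (hM : M.IsSymm) (hK : K.IsSymm) (hMu : IsUnit M) : M * (M⁻¹ * K) = (M⁻¹ * K)ᵀ * M := by
  have hdet := (isUnit_iff_isUnit_det M).mp hMu
  rw [transpose_mul, hK.eq, transpose_nonsing_inv, hM.eq, mul_nonsing_inv_cancel_left _ _ hdet,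
    nonsing_inv_mul_cancel_right _ _ hdet]

end Matrix

/-- L²-unitarity of the discrete free Schrödinger subflow in coefficient form:
for real symmetric `M`, `K` with `M` invertible and
`c(t) = exp(−(i/2) t · M⁻¹K) c₀`, the quadratic form `star c ⬝ᵥ (M ⬝ᵥ c)` is conserved. -/
theorem discrete_L2_conservation_free_flow (J : ℕ) (M K : Matrix (Fin J) (Fin J) ℝ)
    (hMsymm : M.IsSymm) (hKsymm : K.IsSymm) (hM : IsUnit M) (c₀ : Fin J → ℂ) :
    ∀ t : ℝ,
      star ((NormedSpace.exp ((-(Complex.I / 2) * (t : ℂ)) •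
          ((M⁻¹ * K).map Complex.ofReal))) *ᵥ c₀) ⬝ᵥ
        ((M.map Complex.ofReal) *ᵥ
          ((NormedSpace.exp ((-(Complex.I / 2) * (t : ℂ)) •
            ((M⁻¹ * K).map Complex.ofReal))) *ᵥ c₀)) =
      star c₀ ⬝ᵥ ((M.map Complex.ofReal) *ᵥ c₀) := by
  intro t
  have hMA : M.map Complex.ofReal * (M⁻¹ * K).map Complex.ofReal =
      ((M⁻¹ * K).map Complex.ofReal)ᴴ * M.map Complex.ofReal := by
    rw [← conjTranspose_map _ fun r => by simp, conjTranspose_eq_transpose_of_trivial]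
    have hreal := congrArg Complex.ofRealHom.mapMatrix
      (hMsymm.mul_nonsing_inv_mul_eq_transpose_mul hKsymm hM)
    rwa [map_mul _ M, map_mul _ (M⁻¹ * K)ᵀ] at hreal
  have hz : star (-(Complex.I / 2) * (t : ℂ)) = -(-(Complex.I / 2) * (t : ℂ)) := by
    simp [neg_div]
  rw [star_mulVec_dotProduct_mulVec,
    conjTranspose_exp_mul_mul_exp (mul_smul_eq_neg_conjTranspose_smul_mul hMA hz)]
end

section
/- Let J ∈ ℕ, let M and K be real symmetric J×J matrices with M invertible, let c₀ ∈ ℂ^J, and set c(t) = exp(−(i/2) t · M⁻¹K) · c₀ (the real matrices acting on ℂ^J via entrywise coercion). Then for every t ∈ ℝ, star(c(t)) ⬝ᵥ (K ⬝ᵥ c(t)) = star(c₀) ⬝ᵥ (K ⬝ᵥ c₀). -/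
/-!
With `A = M⁻¹K`, symmetry of `M` and `K` gives `Aᵀ K = K M⁻¹ K = K A`, so for purely imaginary
`z` the generator `z A` is skew-adjoint with respect to the (possibly degenerate) form `K`:
`(z A)ᴴ K = -K (z A)`. Intertwining passes to the exponential, `exp(-(z A)ᴴ) K = K exp(z A)`,
hence `exp(z A)ᴴ K exp(z A) = K`.
-/

open Matrix

open NormedSpace in
theorem NormedSpace.star_exp_mul_mul_exp_of_star_mul_eq_neg {𝔸 : Type*} [NormedRing 𝔸]
    [NormedAlgebra ℚ 𝔸] [CompleteSpace 𝔸] [StarRing 𝔸] [ContinuousStar 𝔸] {a x : 𝔸}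
    (h : star a * x = -(x * a)) : star (exp a) * x * exp a = x := by
  have hsemiconj : SemiconjBy x a (-star a) := by
    rw [SemiconjBy, neg_mul, h, neg_neg]
  simpa [star_exp] using hsemiconj.exp_neg_mul_mul_exp_eq_self

namespace Matrix

variable {m : Type*} [Fintype m]

theorem conjTranspose_exp_mul_mul_exp_of_conjTranspose_mul_eq_neg [DecidableEq m]
    {𝔸 : Type*} [NormedRing 𝔸] [NormedAlgebra ℚ 𝔸] [CompleteSpace 𝔸] [StarRing 𝔸]
    [ContinuousStar 𝔸] {A X : Matrix m m 𝔸} (h : Aᴴ * X = -(X * A)) :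
    (NormedSpace.exp A)ᴴ * X * NormedSpace.exp A = X := by
  -- The operator-norm topology is the product topology only up to unfolding, which instance
  -- search does not see through; the two instances are supplied by hand.
  open scoped Norms.Operator in
  refine @NormedSpace.star_exp_mul_mul_exp_of_star_mul_eq_neg _ _ _ ?_ _ ?_ _ _ h
  · exact (inferInstance : CompleteSpace (m → m → 𝔸))
  · exact (inferInstance : ContinuousStar (Matrix m m 𝔸))

theorem star_mulVec_dotProduct_mulVec_mulVec {R : Type*} [NonUnitalSemiring R] [StarRing R]
    (E X : Matrix m m R) (v : m → R) :
    star (E *ᵥ v) ⬝ᵥ (X *ᵥ (E *ᵥ v)) = star v ⬝ᵥ ((Eᴴ * X * E) *ᵥ v) := by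
  rw [star_mulVec, mulVec_mulVec, dotProduct_mulVec, vecMul_vecMul, ← dotProduct_mulVec,
    Matrix.mul_assoc]

theorem IsSymm.transpose_mul_mul_eq {R : Type*} [CommSemiring R] {N X : Matrix m m R}
    (hN : N.IsSymm) (hX : X.IsSymm) : (N * X)ᵀ * X = X * (N * X) := by
  rw [transpose_mul, hN.eq, hX.eq, Matrix.mul_assoc]

omit [Fintype m] in
theorem conjTranspose_map_ofReal {n : Type*} (P : Matrix m n ℝ) :
    (P.map Complex.ofReal)ᴴ = Pᵀ.map Complex.ofReal := by
  rw [← conjTranspose_eq_transpose_of_trivial, conjTranspose_map]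
  exact fun r => (Complex.conj_ofReal r).symm

end Matrix

theorem discrete_H1_conservation_free_flow_general (J : ℕ) (M K : Matrix (Fin J) (Fin J) ℝ)
    (hMsymm : M.IsSymm) (hKsymm : K.IsSymm) (c₀ : Fin J → ℂ) :
    ∀ t : ℝ,
      star ((NormedSpace.exp ((-(Complex.I / 2) * (t : ℂ)) •
          ((M⁻¹ * K).map Complex.ofReal))) *ᵥ c₀) ⬝ᵥ
        ((K.map Complex.ofReal) *ᵥ
          ((NormedSpace.exp ((-(Complex.I / 2) * (t : ℂ)) •
            ((M⁻¹ * K).map Complex.ofReal))) *ᵥ c₀)) =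
      star c₀ ⬝ᵥ ((K.map Complex.ofReal) *ᵥ c₀) := by
  intro t
  set z : ℂ := -(Complex.I / 2) * (t : ℂ)
  set A := (M⁻¹ * K).map Complex.ofReal
  set Kc := K.map Complex.ofReal
  have hz : star z = -z := by simp [z, neg_div]
  have hintertwine : Aᴴ * Kc = Kc * A := by
    have hmap (P Q : Matrix (Fin J) (Fin J) ℝ) :
        (P * Q).map Complex.ofReal = P.map Complex.ofReal * Q.map Complex.ofReal :=
      Matrix.map_mul (f := Complex.ofRealHom)
    rw [conjTranspose_map_ofReal, ← hmap, ← hmap, hMsymm.inv.transpose_mul_mul_eq hKsymm]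
  have hskew : (z • A)ᴴ * Kc = -(Kc * (z • A)) := by
    rw [conjTranspose_smul, smul_mul_assoc, hintertwine, hz, neg_smul, mul_smul_comm]
  rw [star_mulVec_dotProduct_mulVec_mulVec,
    conjTranspose_exp_mul_mul_exp_of_conjTranspose_mul_eq_neg hskew]

/-- H¹-unitarity of the discrete free Schrödinger subflow in coefficient form:
for real symmetric `M`, `K` with `M` invertible and
`c(t) = exp(−(i/2) t · M⁻¹K) c₀`, the quadratic form `star c ⬝ᵥ (K ⬝ᵥ c)` is conserved. -/
theorem discrete_H1_conservation_free_flow (J : ℕ) (M K : Matrix (Fin J) (Fin J) ℝ)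
    (hMsymm : M.IsSymm) (hKsymm : K.IsSymm) (hM : IsUnit M) (c₀ : Fin J → ℂ) :
    ∀ t : ℝ,
      star ((NormedSpace.exp ((-(Complex.I / 2) * (t : ℂ)) •
          ((M⁻¹ * K).map Complex.ofReal))) *ᵥ c₀) ⬝ᵥ
        ((K.map Complex.ofReal) *ᵥ
          ((NormedSpace.exp ((-(Complex.I / 2) * (t : ℂ)) •
            ((M⁻¹ * K).map Complex.ofReal))) *ᵥ c₀)) =
      star c₀ ⬝ᵥ ((K.map Complex.ofReal) *ᵥ c₀) :=
  discrete_H1_conservation_free_flow_general J M K hMsymm hKsymm c₀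
end

section
/- Let J ∈ ℕ, let M and Φ be real symmetric J×J matrices with M invertible, let c₀ ∈ ℂ^J, and set c(t) = exp(−i t · M⁻¹Φ) · c₀ (the real matrices acting on ℂ^J via entrywise coercion). Then for every t ∈ ℝ, star(c(t)) ⬝ᵥ (M ⬝ᵥ c(t)) = star(c₀) ⬝ᵥ (M ⬝ᵥ c₀). -/
open Matrix

/-!
Write `A = M⁻¹Φ` and `B = -i t A`. Symmetry of `M` and `Φ` gives `Aᵀ M = Φ = M A`, so `B` is
skew-adjoint for the form `M`: `M B = -Bᴴ M`. Intertwining passes to the exponential series, so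
`M exp B = exp (-Bᴴ) M`, i.e. `(exp B)ᴴ M (exp B) = M`, which is the conservation law.
-/

theorem Matrix.star_mulVec_dotProduct_mulVec_mulVec_s10 {n α : Type*} [Fintype n] [CommSemiring α]
    [StarRing α] (M N : Matrix n n α) (x : n → α) :
    star (N *ᵥ x) ⬝ᵥ (M *ᵥ (N *ᵥ x)) = star x ⬝ᵥ ((Nᴴ * M * N) *ᵥ x) := by
  rw [star_mulVec, dotProduct_mulVec, vecMul_vecMul, ← dotProduct_mulVec, mulVec_mulVec]

open NormedSpace Matrix.Norms.Operator in
theorem Matrix.conjTranspose_exp_mul_mul_exp_s10 {n 𝔸 : Type*} [Fintype n] [DecidableEq n]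
    [NormedRing 𝔸] [NormedAlgebra ℚ 𝔸] [CompleteSpace 𝔸] [StarRing 𝔸] [ContinuousStar 𝔸]
    {M B : Matrix n n 𝔸} (h : M * B = -Bᴴ * M) :
    (exp B)ᴴ * M * exp B = M := by
  rw [← exp_conjTranspose, ← neg_neg Bᴴ]
  -- The operator norm induces the product uniformity, but not reducibly enough for
  -- instance search to find completeness on its own.
  exact @SemiconjBy.exp_neg_mul_mul_exp_eq_self _ _ _
    (inferInstanceAs (CompleteSpace (n → n → 𝔸))) _ _ _ h

theorem Matrix.IsSymm.transpose_inv_mul_mul_self {n α : Type*} [Fintype n] [DecidableEq n]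
    [CommRing α] {M Φ : Matrix n n α} (hM : M.IsSymm) (hΦ : Φ.IsSymm) (hdet : IsUnit M.det) :
    (M⁻¹ * Φ)ᵀ * M = Φ := by
  rw [transpose_mul, hΦ.eq, transpose_nonsing_inv, hM.eq, mul_assoc, nonsing_inv_mul M hdet,
    mul_one]

theorem Matrix.conjTranspose_map_ofReal_mul_map_ofReal {n : Type*} [Fintype n]
    {A M : Matrix n n ℝ} (hA : Aᵀ * M = M * A) :
    (A.map Complex.ofReal)ᴴ * M.map Complex.ofReal =
      M.map Complex.ofReal * A.map Complex.ofReal := by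
  ext i j
  simpa [mul_apply] using congr(($hA i j : ℂ))

theorem Matrix.map_ofReal_mul_smul_map_ofReal {n : Type*} [Fintype n] {A M : Matrix n n ℝ}
    (hA : Aᵀ * M = M * A) {s : ℂ} (hs : star s = -s) :
    M.map Complex.ofReal * (s • A.map Complex.ofReal) =
      -(s • A.map Complex.ofReal)ᴴ * M.map Complex.ofReal := by
  rw [conjTranspose_smul, hs, neg_smul, neg_neg, smul_mul,
    conjTranspose_map_ofReal_mul_map_ofReal hA, Matrix.mul_smul]

/-- L²-unitarity of the discrete potential subflow in coefficient form:
for real symmetric `M`, `Φ` with `M` invertible and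
`c(t) = exp(−i t · M⁻¹Φ) c₀`, the quadratic form `star c ⬝ᵥ (M ⬝ᵥ c)` is conserved. -/
theorem discrete_L2_conservation_potential_flow (J : ℕ) (M Φ : Matrix (Fin J) (Fin J) ℝ)
    (hMsymm : M.IsSymm) (hΦsymm : Φ.IsSymm) (hM : IsUnit M) (c₀ : Fin J → ℂ) :
    ∀ t : ℝ,
      star ((NormedSpace.exp ((-Complex.I * (t : ℂ)) •
          ((M⁻¹ * Φ).map Complex.ofReal))) *ᵥ c₀) ⬝ᵥ
        ((M.map Complex.ofReal) *ᵥ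
          ((NormedSpace.exp ((-Complex.I * (t : ℂ)) •
            ((M⁻¹ * Φ).map Complex.ofReal))) *ᵥ c₀)) =
      star c₀ ⬝ᵥ ((M.map Complex.ofReal) *ᵥ c₀) := by
  intro t
  have hdet : IsUnit M.det := (isUnit_iff_isUnit_det M).mp hM
  have hA : (M⁻¹ * Φ)ᵀ * M = M * (M⁻¹ * Φ) := by
    rw [hMsymm.transpose_inv_mul_mul_self hΦsymm hdet, mul_nonsing_inv_cancel_left _ _ hdet]
  have hskew := map_ofReal_mul_smul_map_ofReal hA (s := -Complex.I * t)
    (by simp)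
  rw [star_mulVec_dotProduct_mulVec_mulVec_s10, conjTranspose_exp_mul_mul_exp_s10 hskew]
end
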